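/- arXiv:2002.09006 — 6 statements merged into one kernel-verified Lean document; each statement's English description precedes it below -/
import Mathlib

section
/- Fix m ≥ 1. The map sending a tuple (A_1, …, A_m) ∈ {x, x+1}^m to the pair (F_m, F_{m−1}) of its Fibonacci polynomials is injective; consequently there are exactly 2^m distinct pairs (F_m, F_{m−1}) arising from Fibonacci polynomials of length m. -/
open Polynomial

/-- The Fibonacci polynomials over `𝔽₂` associated to a sequence of partial
quotients `A`: `F 0 = 1`, `F 1 = A 1`, `F (k+2) = A (k+2) * F (k+1) + F k`. -/
noncomputable def fibPoly (A : ℕ → Polynomial (ZMod 2)) : ℕ → Polynomial (ZMod 2)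
  | 0 => 1
  | 1 => A 1
  | (k + 2) => A (k + 2) * fibPoly A (k + 1) + fibPoly A k

/-!
Over `𝔽₂` the partial quotients `A k` have positive degree, so `deg F k` is strictly increasing
and `F (k + 1) = A (k + 1) * F k + F (k - 1)` is a Euclidean division: `A (k + 1)` and `F (k - 1)`
are the quotient and remainder of `F (k + 1)` by `F k`. Hence the pair `(F m, F (m - 1))`
determines `A m` and `F (m - 2)`, and descending, every `A k`. Writing `A k = X + c_k` with
`c ∈ 𝔽₂ ^ m` then gives `2 ^ m` distinct pairs.
-/

lemma Polynomial.monic_of_ne_zero_zmod_two {p : (ZMod 2)[X]} (hp : p ≠ 0) : p.Monic :=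
  (by decide : ∀ a : ZMod 2, a ≠ 0 → a = 1) _ (leadingCoeff_ne_zero.mpr hp)

namespace fibPoly

lemma congr {A B : ℕ → (ZMod 2)[X]} :
    ∀ {n : ℕ}, (∀ k, 1 ≤ k → k ≤ n → A k = B k) → fibPoly A n = fibPoly B n
  | 0, _ => rfl
  | 1, h => h 1 le_rfl le_rfl
  | n + 2, h => by
    simp only [fibPoly]
    rw [h (n + 2) (by omega) le_rfl, congr fun k h1 h2 => h k h1 (by omega),
      congr fun k h1 h2 => h k h1 (by omega)]

variable {A B : ℕ → (ZMod 2)[X]}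

lemma natDegree_lt_natDegree_succ :
    ∀ {n : ℕ}, (∀ k, 1 ≤ k → k ≤ n + 1 → 0 < (A k).natDegree) →
      (fibPoly A n).natDegree < (fibPoly A (n + 1)).natDegree
  | 0, hA => by simpa [fibPoly] using hA 1 le_rfl le_rfl
  | n + 1, hA => by
    have hlt := natDegree_lt_natDegree_succ (n := n) fun k h1 h2 => hA k h1 (by omega)
    have hpos := hA (n + 2) (by omega) le_rfl
    have hmul : (A (n + 2) * fibPoly A (n + 1)).natDegree
        = (A (n + 2)).natDegree + (fibPoly A (n + 1)).natDegree :=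
      natDegree_mul (ne_zero_of_natDegree_gt hpos) (ne_zero_of_natDegree_gt hlt)
    show _ < (A (n + 2) * fibPoly A (n + 1) + fibPoly A n).natDegree
    rw [natDegree_add_eq_left_of_natDegree_lt (by omega), hmul]
    omega

lemma divByMonic_eq_and_modByMonic_eq (n : ℕ)
    (hA : ∀ k, 1 ≤ k → k ≤ n + 1 → 0 < (A k).natDegree) :
    fibPoly A (n + 2) /ₘ fibPoly A (n + 1) = A (n + 2) ∧
      fibPoly A (n + 2) %ₘ fibPoly A (n + 1) = fibPoly A n := by
  have hlt := natDegree_lt_natDegree_succ hA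
  refine div_modByMonic_unique _ _ (monic_of_ne_zero_zmod_two (ne_zero_of_natDegree_gt hlt))
    ⟨?_, degree_lt_degree hlt⟩
  simp only [fibPoly]
  ring

lemma eq_of_eq_of_eq_sub_one :
    ∀ {m : ℕ}, (∀ k, 1 ≤ k → k ≤ m → 0 < (A k).natDegree) →
      (∀ k, 1 ≤ k → k ≤ m → 0 < (B k).natDegree) →
      fibPoly A m = fibPoly B m → fibPoly A (m - 1) = fibPoly B (m - 1) →
      ∀ k, 1 ≤ k → k ≤ m → A k = B k
  | 0, _, _, _, _, k, hk1, hk2 => absurd (hk1.trans hk2) (by omega)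
  | 1, _, _, h1, _, k, hk1, hk2 => by
    obtain rfl : k = 1 := by omega
    exact h1
  | n + 2, hA, hB, h2, (h1 : fibPoly A (n + 1) = fibPoly B (n + 1)), k, hk1, hk2 => by
    have hA' : ∀ k, 1 ≤ k → k ≤ n + 1 → 0 < (A k).natDegree := fun k h h' => hA k h (by omega)
    have hB' : ∀ k, 1 ≤ k → k ≤ n + 1 → 0 < (B k).natDegree := fun k h h' => hB k h (by omega)
    obtain ⟨hdivA, hmodA⟩ := divByMonic_eq_and_modByMonic_eq n hA'
    obtain ⟨hdivB, hmodB⟩ := divByMonic_eq_and_modByMonic_eq n hB'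
    rw [h2, h1] at hdivA hmodA
    rcases Nat.lt_or_ge k (n + 2) with hk | hk
    · exact eq_of_eq_of_eq_sub_one hA' hB' h1 (hmodA.symm.trans hmodB) k hk1 (by omega)
    · obtain rfl : k = n + 2 := by omega
      exact hdivA.symm.trans hdivB

end fibPoly

lemma Polynomial.eq_X_add_C_coeff_zero_of_eq_X_or_eq_X_add_one {R : Type*} [Semiring R]
    {p : R[X]} (hp : p = X ∨ p = X + 1) : p = X + C (p.coeff 0) := by
  rcases hp with rfl | rfl <;> simp

lemma Polynomial.natDegree_pos_of_eq_X_or_eq_X_add_one {R : Type*} [Semiring R] [Nontrivial R]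
    {p : R[X]} (hp : p = X ∨ p = X + 1) : 0 < p.natDegree := by
  rw [eq_X_add_C_coeff_zero_of_eq_X_or_eq_X_add_one hp, natDegree_X_add_C]
  exact one_pos

noncomputable def partialQuotientsOfFin {m : ℕ} (c : Fin m → ZMod 2) (k : ℕ) : (ZMod 2)[X] :=
  X + C (if h : k - 1 < m then c ⟨k - 1, h⟩ else 0)

lemma partialQuotientsOfFin_eq_X_or_eq_X_add_one {m : ℕ} (c : Fin m → ZMod 2) (k : ℕ) :
    partialQuotientsOfFin c k = X ∨ partialQuotientsOfFin c k = X + 1 := by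
  unfold partialQuotientsOfFin
  generalize (if h : k - 1 < m then c ⟨k - 1, h⟩ else 0) = a
  rcases (by decide : ∀ a : ZMod 2, a = 0 ∨ a = 1) a with rfl | rfl <;> simp

lemma fibPoly_pair_partialQuotientsOfFin_injective (m : ℕ) :
    Function.Injective fun c : Fin m → ZMod 2 =>
      (fibPoly (partialQuotientsOfFin c) m, fibPoly (partialQuotientsOfFin c) (m - 1)) := by
  intro c c' h
  obtain ⟨hm, hm'⟩ := Prod.mk.inj h
  ext i
  have hpos (c : Fin m → ZMod 2) (k : ℕ) : 0 < (partialQuotientsOfFin c k).natDegree :=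
    natDegree_pos_of_eq_X_or_eq_X_add_one (partialQuotientsOfFin_eq_X_or_eq_X_add_one c k)
  have hi := fibPoly.eq_of_eq_of_eq_sub_one (fun k _ _ => hpos c k) (fun k _ _ => hpos c' k)
    hm hm' (i + 1) (by omega) i.isLt
  simpa [partialQuotientsOfFin] using hi

lemma setOf_fibPoly_pair_eq_range (m : ℕ) :
    {pq : (ZMod 2)[X] × (ZMod 2)[X] | ∃ A : ℕ → (ZMod 2)[X],
      (∀ k, 1 ≤ k → k ≤ m → A k = X ∨ A k = X + 1) ∧ pq = (fibPoly A m, fibPoly A (m - 1))} =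
    Set.range fun c : Fin m → ZMod 2 =>
      (fibPoly (partialQuotientsOfFin c) m, fibPoly (partialQuotientsOfFin c) (m - 1)) := by
  ext pq
  constructor
  · rintro ⟨A, hA, rfl⟩
    have hAc : ∀ k, 1 ≤ k → k ≤ m →
        partialQuotientsOfFin (fun i : Fin m => (A (i + 1)).coeff 0) k = A k := by
      intro k hk1 hk2
      rw [eq_X_add_C_coeff_zero_of_eq_X_or_eq_X_add_one (hA k hk1 hk2), partialQuotientsOfFin,
        dif_pos (by omega), Nat.sub_add_cancel hk1]
    exact ⟨_, Prod.ext (fibPoly.congr hAc)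
      (fibPoly.congr fun k hk1 hk2 => hAc k hk1 (by omega))⟩
  · rintro ⟨c, rfl⟩
    exact ⟨_, fun k _ _ => partialQuotientsOfFin_eq_X_or_eq_X_add_one c k, rfl⟩

theorem fibPoly_pair_injective_card_general (m : ℕ) :
    (∀ A B : ℕ → Polynomial (ZMod 2),
      (∀ k, 1 ≤ k → k ≤ m → A k = X ∨ A k = X + 1) →
      (∀ k, 1 ≤ k → k ≤ m → B k = X ∨ B k = X + 1) →
      fibPoly A m = fibPoly B m → fibPoly A (m - 1) = fibPoly B (m - 1) →
      ∀ k, 1 ≤ k → k ≤ m → A k = B k) ∧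
    Set.ncard {pq : Polynomial (ZMod 2) × Polynomial (ZMod 2) |
      ∃ A : ℕ → Polynomial (ZMod 2),
        (∀ k, 1 ≤ k → k ≤ m → A k = X ∨ A k = X + 1) ∧
        pq = (fibPoly A m, fibPoly A (m - 1))} = 2 ^ m := by
  refine ⟨fun A B hA hB => fibPoly.eq_of_eq_of_eq_sub_one
    (fun k hk1 hk2 => natDegree_pos_of_eq_X_or_eq_X_add_one (hA k hk1 hk2))
    (fun k hk1 hk2 => natDegree_pos_of_eq_X_or_eq_X_add_one (hB k hk1 hk2)), ?_⟩
  rw [setOf_fibPoly_pair_eq_range, Set.ncard_range_of_injective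
    (fibPoly_pair_partialQuotientsOfFin_injective m)]
  simp

/-- The map `(A 1, …, A m) ↦ (F m, F (m-1))` is injective on tuples with entries
in `{x, x+1}`; consequently there are exactly `2 ^ m` distinct pairs
`(F m, F (m-1))` arising from Fibonacci polynomials of length `m`. -/
theorem fibPoly_pair_injective_card (m : ℕ) (hm : 1 ≤ m) :
    (∀ A B : ℕ → Polynomial (ZMod 2),
      (∀ k, 1 ≤ k → k ≤ m → A k = X ∨ A k = X + 1) →
      (∀ k, 1 ≤ k → k ≤ m → B k = X ∨ B k = X + 1) →
      fibPoly A m = fibPoly B m → fibPoly A (m - 1) = fibPoly B (m - 1) →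
      ∀ k, 1 ≤ k → k ≤ m → A k = B k) ∧
    Set.ncard {pq : Polynomial (ZMod 2) × Polynomial (ZMod 2) |
      ∃ A : ℕ → Polynomial (ZMod 2),
        (∀ k, 1 ≤ k → k ≤ m → A k = X ∨ A k = X + 1) ∧
        pq = (fibPoly A m, fibPoly A (m - 1))} = 2 ^ m :=
  fibPoly_pair_injective_card_general m
end

section
/- Fix m ≥ 1 and a tuple (A_1, …, A_m) ∈ {x, x+1}^m with Fibonacci polynomials (F_k). Let (B_1, …, B_m) be the reversed tuple, B_k := A_{m+1−k}, with Fibonacci polynomials (G_k). Then G_{m−1}·F_{m−1} ≡ 1 (mod F_m); that is, the two numerator polynomials F_{m−1} and G_{m−1} associated with a given denominator F_m are multiplicative inverses of each other modulo F_m. -/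
/-! `fibPoly A n` is the continuant of `A 1, …, A n`. Continuants can be expanded from either
end, so they are invariant under reversal of the tuple, and `G (m-1)` is the continuant
`F' (m-1)` of `A 2, …, A m`. The Cassini-type identity `F m * F' (m-2) + F (m-1) * F' (m-1) = 1`
(signs vanish in characteristic 2) then says that `F' (m-1)` inverts `F (m-1)` modulo `F m`. -/

open Polynomial

theorem fibPoly_add_two (A : ℕ → Polynomial (ZMod 2)) (n : ℕ) :
    fibPoly A (n + 2) = A (n + 2) * fibPoly A (n + 1) + fibPoly A n := by
  rw [fibPoly]

theorem fibPoly_add_two_left (A : ℕ → Polynomial (ZMod 2)) (n : ℕ) :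
    fibPoly A (n + 2) =
      A 1 * fibPoly (fun k => A (k + 1)) (n + 1) + fibPoly (fun k => A (k + 2)) n := by
  induction n using Nat.twoStepInduction with
  | zero => simp only [fibPoly]; ring
  | one => simp only [fibPoly]; ring
  | more n ih₀ ih₁ =>
    rw [fibPoly_add_two A (n + 2), fibPoly_add_two (fun k => A (k + 1)) (n + 1),
      fibPoly_add_two (fun k => A (k + 2)) n, ih₀, ih₁]
    ring

theorem fibPoly_reverse (n : ℕ) (A B : ℕ → Polynomial (ZMod 2))
    (hB : ∀ k, 1 ≤ k → k ≤ n → B k = A (n + 1 - k)) :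
    fibPoly B n = fibPoly A n := by
  induction n using Nat.twoStepInduction generalizing A B with
  | zero => rfl
  | one => simp [fibPoly, hB 1 le_rfl le_rfl]
  | more n ih₀ ih₁ =>
    have h₁ : fibPoly B (n + 1) = fibPoly (fun k => A (k + 1)) (n + 1) :=
      ih₁ _ _ fun k hk₁ hk₂ => by rw [hB k hk₁ (by omega)]; congr 1; omega
    have h₀ : fibPoly B n = fibPoly (fun k => A (k + 2)) n :=
      ih₀ _ _ fun k hk₁ hk₂ => by rw [hB k hk₁ (by omega)]; congr 1; omega
    rw [fibPoly_add_two, h₁, h₀, hB (n + 2) (by omega) le_rfl, Nat.add_sub_cancel_left,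
      fibPoly_add_two_left]

theorem fibPoly_cassini (A : ℕ → Polynomial (ZMod 2)) (n : ℕ) :
    fibPoly A (n + 2) * fibPoly (fun k => A (k + 1)) n
      + fibPoly A (n + 1) * fibPoly (fun k => A (k + 1)) (n + 1) = 1 := by
  have two : (2 : Polynomial (ZMod 2)) = 0 := CharTwo.two_eq_zero
  induction n with
  | zero =>
    simp only [fibPoly]
    linear_combination (A 1 * A 2) * two
  | succ n ih =>
    rw [fibPoly_add_two A (n + 1), fibPoly_add_two (fun k => A (k + 1)) n]
    linear_combination
      ih + (A (n + 3) * fibPoly A (n + 2) * fibPoly (fun k => A (k + 1)) (n + 1)) * two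

theorem fibPoly_reverse_inverse_mod_general (m : ℕ)
    (A B : ℕ → Polynomial (ZMod 2))
    (hB : ∀ k, 1 ≤ k → k ≤ m → B k = A (m + 1 - k)) :
    fibPoly A m ∣ fibPoly B (m - 1) * fibPoly A (m - 1) - 1 := by
  rcases m with _ | _ | n
  · simp [fibPoly]
  · simp [fibPoly]
  · have hrev : fibPoly B (n + 1) = fibPoly (fun k => A (k + 1)) (n + 1) :=
      fibPoly_reverse (n + 1) _ B fun k hk₁ hk₂ => by rw [hB k hk₁ (by omega)]; congr 1; omega
    refine Dvd.intro (-fibPoly (fun k => A (k + 1)) n) ?_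
    rw [Nat.add_sub_cancel, hrev]
    linear_combination -fibPoly_cassini A n

/-- If `B` is the reversal of the tuple `A`, with Fibonacci polynomials `G`,
then `G (m-1) * F (m-1) ≡ 1 (mod F m)`: the two numerator polynomials attached
to a given denominator `F m` are multiplicative inverses modulo `F m`. -/
theorem fibPoly_reverse_inverse_mod (m : ℕ) (hm : 1 ≤ m)
    (A B : ℕ → Polynomial (ZMod 2))
    (hA : ∀ k, 1 ≤ k → k ≤ m → A k = X ∨ A k = X + 1)
    (hB : ∀ k, 1 ≤ k → k ≤ m → B k = A (m + 1 - k)) :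
    fibPoly A m ∣ fibPoly B (m - 1) * fibPoly A (m - 1) - 1 :=
  fibPoly_reverse_inverse_mod_general m A B hB
end

section
/- (Chentsov) Let u : ℕ → ℝ be a sequence with u_i ∈ [0,1) for all i. Then the following are equivalent: (1) for every s ≥ 1, the star discrepancy of the first N overlapping s-blocks (u_i, u_{i+1}, …, u_{i+s−1}), i = 0, …, N−1, tends to 0 as N → ∞ (i.e., u is completely uniformly distributed); (2) for every s ≥ 1, the star discrepancy of the first N non-overlapping s-blocks (u_{si}, u_{si+1}, …, u_{si+s−1}), i = 0, …, N−1, tends to 0 as N → ∞. -/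
/-!
(2) ⇒ (1): for `s ≤ m`, the overlapping `s`-blocks starting at positions `≡ r (mod m)` with
`r + s ≤ m` are sub-blocks of the non-overlapping `m`-blocks, so they are counted by an
`m`-dimensional box with side `1` in the other coordinates. The remaining residues contribute
`O(s/m)`, which is small once `m` is large.

(1) ⇒ (2): let `g` be the indicator of a box of dimension `s` minus its volume, evaluated along
the overlapping blocks. Averaging the sum of `g` along `sℕ` over windows of `H` consecutive
`s`-blocks and applying Cauchy–Schwarz bounds it by `Q √(s/H + η) + 2H`, where `Q η` bounds the
correlations of `g` at lags `s d`, `0 < d < H`. The product of the indicators at `i` and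
`i + s d` is the indicator of a box of dimension `s d + s`, so these correlations are controlled
by the overlapping discrepancies in dimensions `s d + s`.
-/

open Filter

noncomputable def starDisc (s N : ℕ) (v : ℕ → Fin s → ℝ) : ℝ :=
  ⨆ t : Fin s → Set.Icc (0 : ℝ) 1,
    |(((Finset.range N).filter fun i => ∀ j, v i j < (t j : ℝ)).card : ℝ) / (N : ℝ) -
      ∏ j, (t j : ℝ)|

open Finset Topology

namespace Chentsov

section StarDiscrepancy

variable {s N : ℕ} {v : ℕ → Fin s → ℝ}

theorem abs_div_sub_le_iff {c p a x : ℝ} (hx : 0 < x) : |c / x - p| ≤ a ↔ |c - x * p| ≤ x * a := by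
  rw [div_sub' hx.ne', abs_div, abs_of_pos hx, div_le_iff₀ hx, mul_comm a]

theorem abs_card_div_sub_prod_le_one (t : Fin s → Set.Icc (0 : ℝ) 1) :
    |(((range N).filter fun i => ∀ j, v i j < (t j : ℝ)).card : ℝ) / N - ∏ j, (t j : ℝ)| ≤ 1 := by
  have hcard : (((range N).filter fun i => ∀ j, v i j < (t j : ℝ)).card : ℝ) / N ∈
      Set.Icc (0 : ℝ) 1 := by
    refine ⟨by positivity, div_le_one_of_le₀ ?_ (Nat.cast_nonneg N)⟩
    exact_mod_cast (card_filter_le _ _).trans (card_range N).le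
  have hprod : ∏ j, (t j : ℝ) ∈ Set.Icc (0 : ℝ) 1 :=
    ⟨prod_nonneg fun j _ => (t j).2.1, prod_le_one (fun j _ => (t j).2.1) fun j _ => (t j).2.2⟩
  rw [abs_sub_le_iff]
  constructor <;> linarith [hcard.1, hcard.2, hprod.1, hprod.2]

theorem le_starDisc (t : Fin s → Set.Icc (0 : ℝ) 1) :
    |(((range N).filter fun i => ∀ j, v i j < (t j : ℝ)).card : ℝ) / N - ∏ j, (t j : ℝ)| ≤
      starDisc s N v :=
  le_ciSup (f := fun t : Fin s → Set.Icc (0 : ℝ) 1 =>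
      |(((range N).filter fun i => ∀ j, v i j < (t j : ℝ)).card : ℝ) / N - ∏ j, (t j : ℝ)|)
    ⟨1, by rintro x ⟨t, rfl⟩; exact abs_card_div_sub_prod_le_one t⟩ t

theorem starDisc_nonneg : 0 ≤ starDisc s N v :=
  (abs_nonneg _).trans (le_starDisc fun _ => ⟨0, le_rfl, zero_le_one⟩)

theorem abs_card_sub_le_mul_starDisc (t : Fin s → Set.Icc (0 : ℝ) 1) :
    |(((range N).filter fun i => ∀ j, v i j < (t j : ℝ)).card : ℝ) - N * ∏ j, (t j : ℝ)| ≤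
      N * starDisc s N v := by
  rcases N.eq_zero_or_pos with rfl | hN
  · simp
  · have hN : (0 : ℝ) < N := by exact_mod_cast hN
    exact (abs_div_sub_le_iff hN).1 (le_starDisc t)

theorem starDisc_le_of_forall (hN : 0 < N) {a : ℝ}
    (h : ∀ t : Fin s → Set.Icc (0 : ℝ) 1,
      |(((range N).filter fun i => ∀ j, v i j < (t j : ℝ)).card : ℝ) - N * ∏ j, (t j : ℝ)| ≤
        N * a) :
    starDisc s N v ≤ a := by
  have hN : (0 : ℝ) < N := by exact_mod_cast hN
  have : Nonempty (Fin s → Set.Icc (0 : ℝ) 1) := ⟨fun _ => ⟨0, le_rfl, zero_le_one⟩⟩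
  refine ciSup_le fun t => ?_
  exact (abs_div_sub_le_iff hN).2 (h t)

end StarDiscrepancy

/-- `b` describes the anchored box `∏ₙ [0, b n)` of `ℝ^ℕ`, which constrains only the first `m`
coordinates. Boxes of all dimensions are encoded this way, so that sub-boxes, shifted boxes and
intersections of boxes need no reindexing of `Fin` types. -/
def IsAnchoredBox (m : ℕ) (b : ℕ → ℝ) : Prop :=
  (∀ n, b n ∈ Set.Icc (0 : ℝ) 1) ∧ ∀ n, m ≤ n → b n = 1

def boxOfFin {s : ℕ} (t : Fin s → Set.Icc (0 : ℝ) 1) (n : ℕ) : ℝ :=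
  if h : n < s then t ⟨n, h⟩ else 1

def shiftBox (r : ℕ) (b : ℕ → ℝ) (n : ℕ) : ℝ :=
  if r ≤ n then b (n - r) else 1

open scoped Classical in
noncomputable def boxIndicator (u b : ℕ → ℝ) (i : ℕ) : ℝ :=
  if ∀ j, u (i + j) < b j then 1 else 0

section Boxes

variable {m : ℕ} {b b' : ℕ → ℝ}

theorem isAnchoredBox_boxOfFin {s : ℕ} (t : Fin s → Set.Icc (0 : ℝ) 1) :
    IsAnchoredBox s (boxOfFin t) := by
  refine ⟨fun n => ?_, fun n hn => dif_neg hn.not_gt⟩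
  unfold boxOfFin
  split
  · exact (t _).2
  · exact ⟨zero_le_one, le_rfl⟩

namespace IsAnchoredBox

theorem mono (hb : IsAnchoredBox m b) {m' : ℕ} (h : m ≤ m') : IsAnchoredBox m' b :=
  ⟨hb.1, fun n hn => hb.2 n (h.trans hn)⟩

theorem shiftBox (hb : IsAnchoredBox m b) (r : ℕ) : IsAnchoredBox (r + m) (shiftBox r b) := by
  refine ⟨fun n => ?_, fun n hn => ?_⟩
  · unfold Chentsov.shiftBox
    split
    · exact hb.1 _
    · exact ⟨zero_le_one, le_rfl⟩
  · rw [Chentsov.shiftBox, if_pos (by omega), hb.2 _ (by omega)]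

theorem inf (hb : IsAnchoredBox m b) (hb' : IsAnchoredBox m b') : IsAnchoredBox m (b ⊓ b') :=
  ⟨fun n => ⟨le_inf (hb.1 n).1 (hb'.1 n).1, inf_le_of_left_le (hb.1 n).2⟩,
    fun n hn => by simp [hb.2 n hn, hb'.2 n hn]⟩

theorem eq_boxOfFin (hb : IsAnchoredBox m b) : b = boxOfFin fun j : Fin m => ⟨b j, hb.1 j⟩ := by
  ext n
  unfold boxOfFin
  split
  · rfl
  · exact hb.2 n (not_lt.1 ‹_›)

theorem prod_range_eq (hb : IsAnchoredBox m b) {m' : ℕ} (h : m ≤ m') :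
    ∏ n ∈ range m', b n = ∏ n ∈ range m, b n :=
  (prod_subset (range_subset_range.2 h) fun n _ hn => hb.2 n (by simpa using hn)).symm

theorem prod_mem_Icc (hb : IsAnchoredBox m b) (m' : ℕ) :
    ∏ n ∈ range m', b n ∈ Set.Icc (0 : ℝ) 1 :=
  ⟨prod_nonneg fun n _ => (hb.1 n).1, prod_le_one (fun n _ => (hb.1 n).1) fun n _ => (hb.1 n).2⟩

end IsAnchoredBox

theorem prod_range_boxOfFin {s : ℕ} (t : Fin s → Set.Icc (0 : ℝ) 1) :
    ∏ n ∈ range s, boxOfFin t n = ∏ j, (t j : ℝ) := by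
  rw [← Fin.prod_univ_eq_prod_range]
  exact prod_congr rfl fun j _ => dif_pos j.isLt

theorem prod_range_shiftBox (r : ℕ) (b : ℕ → ℝ) (m : ℕ) :
    ∏ n ∈ range (r + m), shiftBox r b n = ∏ n ∈ range m, b n := by
  rw [prod_range_add, prod_eq_one (f := shiftBox r b) fun n hn => if_neg (by simpa using hn),
    one_mul]
  exact prod_congr rfl fun n _ => by rw [shiftBox, if_pos (by omega), Nat.add_sub_cancel_left]

theorem prod_range_inf_shiftBox (hb : IsAnchoredBox m b) {m' : ℕ}
    (hb' : IsAnchoredBox m' b') {r : ℕ} (h : m ≤ r) :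
    ∏ n ∈ range (r + m'), (b ⊓ shiftBox r b') n = (∏ n ∈ range m, b n) * ∏ n ∈ range m', b' n := by
  have hmul : ∀ n, (b ⊓ shiftBox r b') n = b n * shiftBox r b' n := by
    intro n
    by_cases hn : r ≤ n
    · rw [Pi.inf_apply, hb.2 n (h.trans hn), one_mul]
      exact inf_eq_right.2 ((hb'.shiftBox r).1 n).2
    · rw [Pi.inf_apply, shiftBox, if_neg hn, mul_one]
      exact inf_eq_left.2 (hb.1 n).2
  rw [prod_congr rfl fun n _ => hmul n, prod_mul_distrib, prod_range_shiftBox,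
    hb.prod_range_eq (by omega)]

end Boxes

section BoxIndicator

variable {u b b' : ℕ → ℝ} {m : ℕ}

theorem boxIndicator_nonneg (i : ℕ) : 0 ≤ boxIndicator u b i := by
  unfold boxIndicator; split <;> norm_num

theorem boxIndicator_le_one (i : ℕ) : boxIndicator u b i ≤ 1 := by
  unfold boxIndicator; split <;> norm_num

theorem abs_boxIndicator_sub_le_one {v : ℝ} (hv : v ∈ Set.Icc (0 : ℝ) 1) (i : ℕ) :
    |boxIndicator u b i - v| ≤ 1 := by
  have := boxIndicator_nonneg (u := u) (b := b) i
  have := boxIndicator_le_one (u := u) (b := b) i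
  rw [abs_sub_le_iff]
  constructor <;> linarith [hv.1, hv.2]

theorem boxIndicator_shiftBox (hu : ∀ n, u n < 1) (r i : ℕ) :
    boxIndicator u (shiftBox r b) i = boxIndicator u b (i + r) := by
  have key : (∀ j, u (i + j) < shiftBox r b j) ↔ ∀ j, u (i + r + j) < b j := by
    refine ⟨fun h j => ?_, fun h j => ?_⟩
    · simpa [shiftBox, add_assoc] using h (r + j)
    · unfold shiftBox
      split
      · simpa [add_assoc, Nat.add_sub_cancel' ‹r ≤ j›] using h (j - r)
      · exact hu _
  unfold boxIndicator
  classical exact if_congr key rfl rfl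

theorem boxIndicator_inf (i : ℕ) :
    boxIndicator u (b ⊓ b') i = boxIndicator u b i * boxIndicator u b' i := by
  simp only [boxIndicator, Pi.inf_apply, lt_inf_iff, forall_and]
  split_ifs <;> simp_all

theorem sum_boxIndicator_boxOfFin (hu : ∀ n, u n < 1) {s : ℕ} (t : Fin s → Set.Icc (0 : ℝ) 1)
    (p : ℕ → ℕ) (N : ℕ) :
    ∑ i ∈ range N, boxIndicator u (boxOfFin t) (p i) =
      (((range N).filter fun i => ∀ j : Fin s, u (p i + j) < (t j : ℝ)).card : ℝ) := by
  have key : ∀ i, (∀ j, u (i + j) < boxOfFin t j) ↔ ∀ j : Fin s, u (i + j) < (t j : ℝ) := by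
    refine fun i => ⟨fun h j => by simpa [boxOfFin] using h j, fun h j => ?_⟩
    unfold boxOfFin
    split
    · exact h ⟨j, ‹_›⟩
    · exact hu _
  simp only [boxIndicator, key]
  rw [sum_boole]

theorem abs_sum_boxIndicator_sub_le (hu : ∀ n, u n < 1) (hb : IsAnchoredBox m b) (p : ℕ → ℕ)
    (N : ℕ) :
    |∑ i ∈ range N, boxIndicator u b (p i) - N * ∏ n ∈ range m, b n| ≤
      N * starDisc m N (fun i j => u (p i + j)) := by
  rw [hb.eq_boxOfFin, sum_boxIndicator_boxOfFin hu, prod_range_boxOfFin]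
  exact abs_card_sub_le_mul_starDisc _

theorem starDisc_le_of_forall_isAnchoredBox (hu : ∀ n, u n < 1) (p : ℕ → ℕ) {N : ℕ} (hN : 0 < N)
    {a : ℝ}
    (h : ∀ b, IsAnchoredBox m b →
      |∑ i ∈ range N, boxIndicator u b (p i) - N * ∏ n ∈ range m, b n| ≤ N * a) :
    starDisc m N (fun i j => u (p i + j)) ≤ a := by
  refine starDisc_le_of_forall hN fun t => ?_
  rw [← sum_boxIndicator_boxOfFin hu, ← prod_range_boxOfFin]
  exact h _ (isAnchoredBox_boxOfFin t)

end BoxIndicator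

theorem abs_sum_le_card {ι : Type*} (S : Finset ι) {g : ι → ℝ} (hg : ∀ i ∈ S, |g i| ≤ 1) :
    |∑ i ∈ S, g i| ≤ #S :=
  (abs_sum_le_sum_abs _ _).trans ((sum_le_card_nsmul S _ 1 hg).trans (by simp))

theorem sum_range_mul_add_eq (g : ℕ → ℝ) (m Q c : ℕ) :
    ∑ i ∈ range (m * Q + c), g i =
      ∑ r ∈ range m, ∑ q ∈ range Q, g (m * q + r) + ∑ x ∈ range c, g (m * Q + x) := by
  rw [sum_range_add, sum_comm]
  congr 1
  induction Q with
  | zero => simp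
  | succ Q ih => rw [Nat.mul_succ, sum_range_add, ih, sum_range_succ]

section BlocksToOverlapping

variable {u b : ℕ → ℝ} {s m : ℕ}

theorem abs_sum_boxIndicator_residue_le (hu : ∀ n, u n < 1) (hb : IsAnchoredBox s b) {r : ℕ}
    (hr : r + s ≤ m) (Q : ℕ) :
    |∑ q ∈ range Q, (boxIndicator u b (m * q + r) - ∏ n ∈ range s, b n)| ≤
      Q * starDisc m Q (fun i j => u (m * i + j)) := by
  have h := abs_sum_boxIndicator_sub_le hu ((hb.shiftBox r).mono hr) (m * ·) Q
  rw [(hb.shiftBox r).prod_range_eq hr, prod_range_shiftBox] at h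
  simp only [boxIndicator_shiftBox hu] at h
  rwa [sum_sub_distrib, sum_const, card_range, nsmul_eq_mul]

theorem abs_sum_boxIndicator_sub_le_of_blocks (hu : ∀ n, u n < 1) (hb : IsAnchoredBox s b)
    (hm : 0 < m) (hsm : s ≤ m) (N : ℕ) :
    |∑ i ∈ range N, boxIndicator u b i - N * ∏ n ∈ range s, b n| ≤
      N * starDisc m (N / m) (fun i j => u (m * i + j)) + s * (N / m : ℕ) + m := by
  set Q := N / m
  set D := starDisc m Q (fun i j => u (m * i + j))
  set v := ∏ n ∈ range s, b n
  have hg : ∀ i, |boxIndicator u b i - v| ≤ 1 := abs_boxIndicator_sub_le_one (hb.prod_mem_Icc s)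
  have hD : 0 ≤ D := starDisc_nonneg
  have hmQ : (m : ℝ) * Q ≤ N := by exact_mod_cast Nat.mul_div_le N m
  have hgood : |∑ r ∈ range (m - s), ∑ q ∈ range Q, (boxIndicator u b (m * q + r) - v)| ≤
      (m - s : ℕ) * (Q * D) := by
    refine (abs_sum_le_sum_abs _ _).trans ((sum_le_card_nsmul _ _ (Q * D) fun r hr => ?_).trans ?_)
    · exact abs_sum_boxIndicator_residue_le hu hb (by simp at hr; omega) Q
    · simp
  have hbad : |∑ x ∈ range s, ∑ q ∈ range Q, (boxIndicator u b (m * q + (m - s + x)) - v)| ≤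
      s * Q := by
    refine (abs_sum_le_sum_abs _ _).trans ((sum_le_card_nsmul _ _ (Q : ℝ) fun x _ => ?_).trans ?_)
    · exact (abs_sum_le_card _ fun q _ => hg _).trans (by simp)
    · simp
  have htail : |∑ x ∈ range (N % m), (boxIndicator u b (m * Q + x) - v)| ≤ m :=
    (abs_sum_le_card _ fun x _ => hg _).trans (by simpa using (Nat.mod_lt N hm).le)
  have hcoef : ((m - s : ℕ) : ℝ) * (Q * D) ≤ N * D := by
    rw [← mul_assoc]
    exact mul_le_mul_of_nonneg_right (le_trans (by gcongr; omega) hmQ) hD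
  have hsplit := sum_range_mul_add_eq (fun i => boxIndicator u b i - v) m Q (N % m)
  rw [Nat.div_add_mod, ← Nat.sub_add_cancel hsm, sum_range_add, Nat.sub_add_cancel hsm] at hsplit
  have hsub : ∑ i ∈ range N, boxIndicator u b i - N * v =
      ∑ i ∈ range N, (boxIndicator u b i - v) := by
    simp [sum_sub_distrib]
  rw [hsub, hsplit]
  refine (abs_add_three _ _ _).trans ?_
  linarith

theorem starDisc_le_starDisc_blocks_add (hu : ∀ n, u n < 1) (hm : 0 < m) (hsm : s ≤ m) {N : ℕ}
    (hN : 0 < N) :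
    starDisc s N (fun i j => u (i + j)) ≤
      starDisc m (N / m) (fun i j => u (m * i + j)) + s / m + m / N := by
  refine starDisc_le_of_forall_isAnchoredBox hu id hN fun b hb => ?_
  have hN : (0 : ℝ) < N := by exact_mod_cast hN
  have hQ : (s : ℝ) * (N / m : ℕ) ≤ N * (s / m) := by
    rw [mul_div_left_comm]
    exact mul_le_mul_of_nonneg_left Nat.cast_div_le (Nat.cast_nonneg s)
  have hmN : (m : ℝ) = N * (m / N) := by field_simp
  refine (abs_sum_boxIndicator_sub_le_of_blocks hu hb hm hsm N).trans ?_
  rw [mul_add, mul_add]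
  linarith

end BlocksToOverlapping

theorem tendsto_nhds_zero_of_forall_eventually_lt {α : Type*} {l : Filter α} {f : α → ℝ}
    (h0 : ∀ x, 0 ≤ f x) (h : ∀ ε > 0, ∀ᶠ x in l, f x < ε) : Tendsto f l (𝓝 0) :=
  tendsto_order.2 ⟨fun _ ha => .of_forall fun x => ha.trans_le (h0 x), h⟩

theorem tendsto_starDisc_of_blocks {u : ℕ → ℝ} (hu : ∀ n, u n < 1)
    (h : ∀ m, 1 ≤ m → Tendsto (fun N => starDisc m N fun i j => u (m * i + j)) atTop (𝓝 0))
    (s : ℕ) : Tendsto (fun N => starDisc s N fun i j => u (i + j)) atTop (𝓝 0) := by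
  refine tendsto_nhds_zero_of_forall_eventually_lt (fun _ => starDisc_nonneg) fun ε hε => ?_
  obtain ⟨m, hm⟩ := exists_nat_gt (2 * s / ε + s)
  have hm0 : 0 < m := by
    have : (0 : ℝ) < m := lt_of_le_of_lt (by positivity) hm
    exact_mod_cast this
  have hsm : s < m := by
    have : (s : ℝ) < m := lt_of_le_of_lt (le_add_of_nonneg_left (by positivity)) hm
    exact_mod_cast this
  have hsm' : (s : ℝ) / m < ε / 2 := by
    rw [div_lt_iff₀ (by exact_mod_cast hm0)]
    have := (div_lt_iff₀ hε).1 (lt_of_le_of_lt (le_add_of_nonneg_right (Nat.cast_nonneg s)) hm)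
    linarith
  have hlim : Tendsto (fun N => starDisc m (N / m) (fun i j => u (m * i + j)) + m / N) atTop
      (𝓝 0) := by
    simpa using ((h m hm0).comp (Nat.tendsto_div_const_atTop hm0.ne')).add
      (tendsto_const_div_atTop_nhds_zero_nat (m : ℝ))
  filter_upwards [hlim.eventually_lt_const (half_pos hε), eventually_gt_atTop 0] with N hN hN0
  have := starDisc_le_starDisc_blocks_add hu hm0 hsm.le hN0
  linarith

theorem abs_sum_range_add_sub_sum_range_le (g : ℕ → ℝ) (hg : ∀ i, |g i| ≤ 1) (Q k : ℕ) :
    |∑ q ∈ range Q, g (k + q) - ∑ q ∈ range Q, g q| ≤ 2 * k := by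
  have h : ∑ q ∈ range k, g q + ∑ q ∈ range Q, g (k + q) =
      ∑ q ∈ range Q, g q + ∑ x ∈ range k, g (Q + x) := by
    rw [← sum_range_add, ← sum_range_add, Nat.add_comm]
  have hhead := abs_sum_le_card (range k) fun q _ => hg q
  have htail := abs_sum_le_card (range k) fun x _ => hg (Q + x)
  rw [card_range] at hhead htail
  rw [show ∑ q ∈ range Q, g (k + q) - ∑ q ∈ range Q, g q =
      ∑ x ∈ range k, g (Q + x) - ∑ q ∈ range k, g q by linarith]
  linarith [abs_sub (∑ x ∈ range k, g (Q + x)) (∑ q ∈ range k, g q)]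

theorem sq_sum_range_mul_le (φ : ℕ → ℝ) {s : ℕ} (hs : 0 < s) (Q : ℕ) :
    (∑ q ∈ range Q, φ (s * q)) ^ 2 ≤ Q * ∑ i ∈ range (s * Q), φ i ^ 2 := by
  refine (sq_sum_le_card_mul_sum_sq (s := range Q) (f := fun q => φ (s * q))).trans ?_
  rw [card_range]
  refine mul_le_mul_of_nonneg_left ?_ (Nat.cast_nonneg Q)
  calc ∑ q ∈ range Q, φ (s * q) ^ 2 = ∑ i ∈ (range Q).image (s * ·), φ i ^ 2 :=
        (sum_image (f := fun i => φ i ^ 2) fun a _ b _ h => Nat.eq_of_mul_eq_mul_left hs h).symm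
    _ ≤ ∑ i ∈ range (s * Q), φ i ^ 2 := by
        refine sum_le_sum_of_subset_of_nonneg (fun i hi => ?_) fun i _ _ => sq_nonneg _
        obtain ⟨q, hq, rfl⟩ := mem_image.1 hi
        exact mem_range.2 (Nat.mul_lt_mul_of_pos_left (mem_range.1 hq) hs)

theorem sum_sq_sum_le {ι κ : Type*} [DecidableEq κ] (I : Finset ι) (K : Finset κ) (a : κ → ι → ℝ)
    (ha : ∀ k i, |a k i| ≤ 1) {Y : ℝ} (hY : 0 ≤ Y)
    (hcorr : ∀ k ∈ K, ∀ k' ∈ K, k ≠ k' → ∑ i ∈ I, a k i * a k' i ≤ Y) :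
    ∑ i ∈ I, (∑ k ∈ K, a k i) ^ 2 ≤ #K * #I + #K ^ 2 * Y := by
  have hrow : ∀ k ∈ K, ∑ k' ∈ K, ∑ i ∈ I, a k i * a k' i ≤ #I + #K * Y := by
    intro k hk
    rw [← add_sum_erase K _ hk]
    have hdiag : ∑ i ∈ I, a k i * a k i ≤ #I :=
      (sum_le_card_nsmul I _ 1 fun i _ => by nlinarith [abs_le.1 (ha k i)]).trans (by simp)
    have hoff : ∑ k' ∈ K.erase k, ∑ i ∈ I, a k i * a k' i ≤ #K * Y :=
      (sum_le_card_nsmul _ _ Y fun k' hk' => hcorr k hk k' (mem_of_mem_erase hk')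
        (ne_of_mem_erase hk').symm).trans (by
          rw [nsmul_eq_mul]
          exact mul_le_mul_of_nonneg_right (by exact_mod_cast card_erase_le) hY)
    linarith
  calc ∑ i ∈ I, (∑ k ∈ K, a k i) ^ 2 = ∑ k ∈ K, ∑ k' ∈ K, ∑ i ∈ I, a k i * a k' i := by
        simp_rw [sq, sum_mul_sum]
        rw [sum_comm]
        exact sum_congr rfl fun k _ => sum_comm
    _ ≤ ∑ _k ∈ K, ((#I : ℝ) + #K * Y) := sum_le_sum hrow
    _ = #K * #I + #K ^ 2 * Y := by rw [sum_const, nsmul_eq_mul]; ring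

theorem abs_sum_range_mul_le_of_correlations (g : ℕ → ℝ) (hg : ∀ i, |g i| ≤ 1) {s H Q : ℕ}
    (hs : 0 < s) (hH : 0 < H) {η : ℝ} (hη : 0 ≤ η)
    (hcorr : ∀ k < H, ∀ k' < H, k ≠ k' →
      ∑ i ∈ range (s * Q), g (s * k + i) * g (s * k' + i) ≤ Q * η) :
    |∑ q ∈ range Q, g (s * q)| ≤ Q * √(s / H + η) + 2 * H := by
  set ψ : ℕ → ℝ := fun i => ∑ k ∈ range H, g (s * k + i)
  set G := ∑ q ∈ range Q, g (s * q)
  have hH' : (0 : ℝ) < H := by exact_mod_cast hH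
  have hwindow : |∑ q ∈ range Q, ψ (s * q) - H * G| ≤ H * (2 * H) := by
    have hshift : ∀ k ∈ range H,
        |∑ q ∈ range Q, g (s * (k + q)) - G| ≤ 2 * H := fun k hk =>
      (abs_sum_range_add_sub_sum_range_le (fun q => g (s * q)) (fun q => hg _) Q k).trans
        (by simpa using (mem_range.1 hk).le)
    have hsum : ∑ q ∈ range Q, ψ (s * q) - H * G =
        ∑ k ∈ range H, (∑ q ∈ range Q, g (s * (k + q)) - G) := by
      simp only [ψ, mul_add, sum_sub_distrib, sum_const, card_range, nsmul_eq_mul]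
      rw [sum_comm]
    rw [hsum]
    exact (abs_sum_le_sum_abs _ _).trans ((sum_le_card_nsmul _ _ _ hshift).trans (by simp))
  have hsq : (∑ q ∈ range Q, ψ (s * q)) ^ 2 ≤ (H * Q * √(s / H + η)) ^ 2 := by
    have hvar := sum_sq_sum_le (range (s * Q)) (range H) (fun k i => g (s * k + i))
      (fun k i => hg _) (by positivity : (0 : ℝ) ≤ Q * η)
      (fun k hk k' hk' hne => hcorr k (mem_range.1 hk) k' (mem_range.1 hk') hne)
    rw [mul_pow, Real.sq_sqrt (by positivity)]
    refine (sq_sum_range_mul_le ψ hs Q).trans ?_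
    calc (Q : ℝ) * ∑ i ∈ range (s * Q), ψ i ^ 2 ≤ Q * (H * (s * Q) + H ^ 2 * (Q * η)) := by
          simpa using mul_le_mul_of_nonneg_left hvar (Nat.cast_nonneg Q)
      _ = (H * Q) ^ 2 * (s / H + η) := by field_simp
  have hψ : |∑ q ∈ range Q, ψ (s * q)| ≤ H * Q * √(s / H + η) :=
    abs_le_of_sq_le_sq hsq (by positivity)
  have hG : |H * G| ≤ H * (Q * √(s / H + η) + 2 * H) := by
    have := abs_sub_abs_le_abs_sub (H * G) (∑ q ∈ range Q, ψ (s * q))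
    rw [abs_sub_comm] at this
    linarith
  rw [abs_mul, abs_of_pos hH'] at hG
  exact le_of_mul_le_mul_left hG hH'

theorem abs_sum_sub_mul_sub_le {ι : Type*} (S : Finset ι) (F F' : ι → ℝ) {v X : ℝ}
    (hv : |v| ≤ 1) (h₁ : |∑ i ∈ S, F i - #S * v| ≤ X) (h₂ : |∑ i ∈ S, F' i - #S * v| ≤ X)
    (h₁₂ : |∑ i ∈ S, F i * F' i - #S * (v * v)| ≤ X) :
    |∑ i ∈ S, (F i - v) * (F' i - v)| ≤ 3 * X := by
  have hexpand : ∑ i ∈ S, (F i - v) * (F' i - v) = (∑ i ∈ S, F i * F' i - #S * (v * v)) -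
      v * (∑ i ∈ S, F i - #S * v) - v * (∑ i ∈ S, F' i - #S * v) := by
    simp only [sub_mul, mul_sub, sum_sub_distrib, ← sum_mul, ← mul_sum, sum_const, nsmul_eq_mul]
    ring
  have hv₁ : |v * (∑ i ∈ S, F i - #S * v)| ≤ X := by
    rw [abs_mul]; exact (mul_le_of_le_one_left (abs_nonneg _) hv).trans h₁
  have hv₂ : |v * (∑ i ∈ S, F' i - #S * v)| ≤ X := by
    rw [abs_mul]; exact (mul_le_of_le_one_left (abs_nonneg _) hv).trans h₂
  rw [hexpand]
  refine (abs_sub _ _).trans ?_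
  linarith [abs_sub (∑ i ∈ S, F i * F' i - #S * (v * v)) (v * (∑ i ∈ S, F i - #S * v))]

section OverlappingToBlocks

variable {u b : ℕ → ℝ} {m s : ℕ}

theorem boxIndicator_mul_boxIndicator_add (hu : ∀ n, u n < 1) (r i : ℕ) :
    boxIndicator u b i * boxIndicator u b (i + r) = boxIndicator u (b ⊓ shiftBox r b) i := by
  rw [boxIndicator_inf, boxIndicator_shiftBox hu]

theorem abs_sum_boxIndicator_window_le (hu : ∀ n, u n < 1) (hb : IsAnchoredBox m b) (a M : ℕ) :
    |∑ i ∈ range M, boxIndicator u b (a + i) - M * ∏ n ∈ range m, b n| ≤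
      (a + M) * starDisc m (a + M) (fun i j => u (i + j)) + a := by
  set v := ∏ n ∈ range m, b n
  have hall := abs_sum_boxIndicator_sub_le hu hb id (a + M)
  have hhead : |∑ i ∈ range a, (boxIndicator u b i - v)| ≤ a := by
    simpa using abs_sum_le_card (range a) fun i _ =>
      abs_boxIndicator_sub_le_one (hb.prod_mem_Icc m) i
  rw [sum_sub_distrib, sum_const, card_range, nsmul_eq_mul] at hhead
  simp only [id, sum_range_add, Nat.cast_add] at hall
  rw [show ∑ i ∈ range M, boxIndicator u b (a + i) - M * v =
      (∑ x ∈ range a, boxIndicator u b x + ∑ x ∈ range M, boxIndicator u b (a + x) - (a + M) * v) -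
        (∑ i ∈ range a, boxIndicator u b i - a * v) by ring]
  exact (abs_sub _ _).trans (add_le_add hall hhead)

theorem sum_boxIndicator_correlation_le (hu : ∀ n, u n < 1) (hb : IsAnchoredBox s b) {H Q : ℕ}
    {ε : ℝ} (hε : ∀ d < H, ∀ n, s * Q ≤ n → starDisc (s * d + s) n (fun i j => u (i + j)) ≤ ε)
    {k k' : ℕ} (hk : k < H) (hk' : k' < H) (hkk' : k ≠ k') :
    ∑ i ∈ range (s * Q), (boxIndicator u b (s * k + i) - ∏ n ∈ range s, b n) *
      (boxIndicator u b (s * k' + i) - ∏ n ∈ range s, b n) ≤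
      3 * ((s * H + s * Q) * ε + s * H) := by
  wlog hlt : k < k' generalizing k k'
  · simpa only [mul_comm] using this hk' hk hkk'.symm (by omega)
  set v := ∏ n ∈ range s, b n
  set X : ℝ := (s * H + s * Q) * ε + s * H
  have hwindow : ∀ d < H, ∀ c, IsAnchoredBox (s * d + s) c → ∀ l < H,
      |∑ i ∈ range (s * Q), boxIndicator u c (s * l + i) -
        (s * Q : ℕ) * ∏ n ∈ range (s * d + s), c n| ≤ X := by
    intro d hd c hc l hl
    have hD := hε d hd (s * l + s * Q) (by omega)
    have hD0 : 0 ≤ starDisc (s * d + s) (s * l + s * Q) (fun i j => u (i + j)) := starDisc_nonneg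
    have hl : (s : ℝ) * l ≤ s * H := by gcongr
    refine (abs_sum_boxIndicator_window_le hu hc _ _).trans ?_
    push_cast
    linarith [mul_le_mul (add_le_add_left hl (s * Q : ℝ)) hD hD0 (by positivity)]
  have hsingle : ∀ l < H,
      |∑ i ∈ range (s * Q), boxIndicator u b (s * l + i) - (s * Q : ℕ) * v| ≤ X := fun l hl => by
    simpa [hb.prod_range_eq] using hwindow 0 (by omega) b (hb.mono (by omega)) l hl
  obtain ⟨d, rfl⟩ : ∃ d, k' = k + d := ⟨k' - k, by omega⟩
  have hpair := hwindow d (by omega) _ ((hb.mono (by omega)).inf (hb.shiftBox (s * d))) k hk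
  rw [prod_range_inf_shiftBox hb hb (Nat.le_mul_of_pos_right s (by omega))] at hpair
  simp only [← boxIndicator_mul_boxIndicator_add hu] at hpair
  have hidx : ∀ i, s * (k + d) + i = s * k + i + s * d := fun i => by ring
  simp only [hidx]
  refine (le_abs_self _).trans (abs_sum_sub_mul_sub_le _ _ _ ?_ ?_ ?_ ?_)
  · exact abs_le.2 ⟨by linarith [(hb.prod_mem_Icc s).1], (hb.prod_mem_Icc s).2⟩
  · simpa using hsingle k hk
  · simpa [← hidx] using hsingle (k + d) hk'
  · simpa using hpair

theorem starDisc_blocks_le (hu : ∀ n, u n < 1) (hs : 0 < s) {H Q : ℕ} (hH : 0 < H) (hQ : 0 < Q)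
    {ε : ℝ} (hε : ∀ d < H, ∀ n, s * Q ≤ n → starDisc (s * d + s) n (fun i j => u (i + j)) ≤ ε) :
    starDisc s Q (fun i j => u (s * i + j)) ≤
      √(s / H + 3 * s * ε + 3 * s * H * (ε + 1) / Q) + 2 * H / Q := by
  have hε0 : 0 ≤ ε := starDisc_nonneg.trans (hε 0 hH (s * Q) le_rfl)
  have hQ' : (0 : ℝ) < Q := by exact_mod_cast hQ
  refine starDisc_le_of_forall_isAnchoredBox hu (s * ·) hQ fun b hb => ?_
  set v := ∏ n ∈ range s, b n
  have hbound := abs_sum_range_mul_le_of_correlations (fun i => boxIndicator u b i - v)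
    (abs_boxIndicator_sub_le_one (hb.prod_mem_Icc s)) hs hH
    (η := 3 * s * ε + 3 * s * H * (ε + 1) / Q) (by positivity)
    fun k hk k' hk' hkk' => (sum_boxIndicator_correlation_le hu hb hε hk hk' hkk').trans_eq
      (by field_simp; ring)
  simp only [sum_sub_distrib, sum_const, card_range, nsmul_eq_mul] at hbound
  rwa [mul_add, mul_div_cancel₀ _ hQ'.ne', add_assoc (s / H : ℝ)]

theorem tendsto_starDisc_blocks (hu : ∀ n, u n < 1)
    (h : ∀ m, 1 ≤ m → Tendsto (fun N => starDisc m N fun i j => u (i + j)) atTop (𝓝 0))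
    (hs : 0 < s) : Tendsto (fun N => starDisc s N fun i j => u (s * i + j)) atTop (𝓝 0) := by
  refine tendsto_nhds_zero_of_forall_eventually_lt (fun _ => starDisc_nonneg) fun ε hε => ?_
  have hs' : (0 : ℝ) < s := by exact_mod_cast hs
  obtain ⟨H, hH⟩ := exists_nat_gt (2 * s / ε ^ 2)
  have hH0 : (0 : ℝ) < H := lt_of_le_of_lt (by positivity) hH
  set ε₁ := ε ^ 2 / (12 * s)
  have hlt : √(s / H + 3 * s * ε₁) < ε := by
    have h₁ : (s : ℝ) / H < ε ^ 2 / 2 := by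
      rw [div_lt_iff₀ hH0]
      have := (div_lt_iff₀ (by positivity)).1 hH
      linarith
    have h₂ : 3 * s * ε₁ = ε ^ 2 / 4 := by simp only [ε₁]; field_simp; ring
    rw [Real.sqrt_lt' hε]
    linarith [sq_nonneg ε]
  have hsmall : ∀ᶠ Q in atTop, ∀ d < H, ∀ n, s * Q ≤ n →
      starDisc (s * d + s) n (fun i j => u (i + j)) ≤ ε₁ := by
    have hev : ∀ d ∈ range H, ∀ᶠ Q in atTop, ∀ n, Q ≤ n →
        starDisc (s * d + s) n (fun i j => u (i + j)) < ε₁ := fun d _ =>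
      eventually_forall_ge_atTop.2 ((h _ (by omega)).eventually_lt_const (by positivity))
    filter_upwards [(eventually_all_finset _).2 hev] with Q hQ d hd n hn
    exact (hQ d (mem_range.2 hd) n (le_trans (Nat.le_mul_of_pos_left Q hs) hn)).le
  have hlim : Tendsto (fun Q : ℕ => √(s / H + 3 * s * ε₁ + 3 * s * H * (ε₁ + 1) / Q) + 2 * H / Q)
      atTop (𝓝 (√(s / H + 3 * s * ε₁))) := by
    simpa using ((tendsto_const_nhds.add (tendsto_const_div_atTop_nhds_zero_nat _)).sqrt).add
      (tendsto_const_div_atTop_nhds_zero_nat (2 * H : ℝ))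
  filter_upwards [hsmall, hlim.eventually_lt_const hlt, eventually_gt_atTop 0] with Q hQε hQ hQ0
  exact (starDisc_blocks_le hu hs (by exact_mod_cast hH0) hQ0 hQε).trans_lt hQ

end OverlappingToBlocks

end Chentsov

/-- (Chentsov) For a sequence `u` with values in `[0,1)`, the star discrepancy of
the first `N` overlapping `s`-blocks tends to `0` for every `s ≥ 1` (i.e. `u` is
completely uniformly distributed) if and only if the star discrepancy of the
first `N` non-overlapping `s`-blocks tends to `0` for every `s ≥ 1`. -/
theorem chentsov (u : ℕ → ℝ) (hu : ∀ i, 0 ≤ u i ∧ u i < 1) :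
    (∀ s : ℕ, 1 ≤ s →
      Tendsto (fun N => starDisc s N fun i j => u (i + (j : ℕ))) atTop (nhds 0)) ↔
    (∀ s : ℕ, 1 ≤ s →
      Tendsto (fun N => starDisc s N fun i j => u (s * i + (j : ℕ))) atTop (nhds 0)) := by
  have hu₁ : ∀ n, u n < 1 := fun n => (hu n).2
  exact ⟨fun h s hs => Chentsov.tendsto_starDisc_blocks hu₁ h hs,
    fun h s _ => Chentsov.tendsto_starDisc_of_blocks hu₁ h s⟩
end

section
/- Let p ∈ 𝔽₂[x] be primitive of degree m ≥ 1, written p = x^m − c_1 x^{m−1} − ⋯ − c_{m−1} x − c_m with c_j ∈ 𝔽₂. Let a : ℕ → 𝔽₂ satisfy the linear recurrence a_{i+m} = c_1 a_{i+m−1} + ⋯ + c_m a_i for all i ≥ 0, with initial state (a_0, …, a_{m−1}) ≠ (0, …, 0). Then a is purely periodic and its minimal period is exactly 2^m − 1. -/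
open Polynomial

/-- A polynomial `p ∈ 𝔽₂[x]` of degree `m` is primitive if it is irreducible and
the residue class of `x` in `𝔽₂[x]/(p)` has multiplicative order `2^m - 1`. -/
def IsPrimitivePoly (p : Polynomial (ZMod 2)) : Prop :=
  Irreducible p ∧ orderOf (AdjoinRoot.root p) = 2 ^ p.natDegree - 1

/-! Write `α` for the class of `x` in the field `K = 𝔽₂[x]/(p)` and let `L : K → 𝔽₂` be the
linear functional taking the values `a₀, …, a_{m-1}` on the power basis `1, α, …, α^{m-1}`.
Since `α` is a root of the characteristic polynomial, `n ↦ L (α ^ n)` satisfies the recurrence,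
so it is the sequence `a`. If `T` is a period, `L` vanishes on `α ^ n * (α ^ T - 1)` for all `n`;
the powers of `α` span `K`, so `L` vanishes on `K * (α ^ T - 1)`, which is all of `K` unless
`α ^ T = 1`. So the minimal period is the order of `α`, which is `2 ^ m - 1` by primitivity. -/

open Finset

section Recurrence

variable {R : Type*} [CommRing R]

def lfsrRecurrence (m : ℕ) (c : ℕ → R) : LinearRecurrence R := ⟨m, fun i => c (m - i)⟩

theorem isSolution_lfsrRecurrence_iff {m : ℕ} {c : ℕ → R} {u : ℕ → R} :
    (lfsrRecurrence m c).IsSolution u ↔ ∀ i, u (i + m) = ∑ j ∈ Icc 1 m, c j * u (i + m - j) := by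
  refine forall_congr' fun i => Eq.congr_right ?_
  refine (Fin.sum_univ_eq_sum_range (fun k => c (m - k) * u (i + k)) m).trans ?_
  refine sum_nbij' (m - ·) (m - ·) ?_ ?_ ?_ ?_ fun k hk => ?_
  any_goals intro j hj; simp at hj ⊢; omega
  rw [show i + m - (m - k) = i + k by simp at hk; omega]

theorem natDegree_X_pow_sub_sum [Nontrivial R] (m : ℕ) (c : ℕ → R) :
    (X ^ m - ∑ j ∈ Icc 1 m, C (c j) * X ^ (m - j)).natDegree = m := by
  refine natDegree_eq_of_degree_eq_some ?_
  rw [degree_sub_eq_left_of_degree_lt] <;> rw [degree_X_pow]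
  refine (degree_sum_le _ _).trans_lt ((Finset.sup_lt_iff (WithBot.bot_lt_coe m)).2 fun j hj => ?_)
  refine (degree_C_mul_X_pow_le _ _).trans_lt ?_
  simp only [mem_Icc] at hj
  exact WithBot.coe_lt_coe.2 (Nat.sub_lt_of_pos_le hj.1 hj.2)

variable {A : Type*} [CommRing A] [Algebra R A] {m : ℕ} {c : ℕ → R} {α : A}

theorem pow_eq_sum_of_aeval_eq_zero
    (h : aeval α (X ^ m - ∑ j ∈ Icc 1 m, C (c j) * X ^ (m - j)) = 0) :
    α ^ m = ∑ j ∈ Icc 1 m, c j • α ^ (m - j) := by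
  simpa [sub_eq_zero, Algebra.smul_def] using h

theorem isSolution_lfsrRecurrence_linearMap_pow (L : A →ₗ[R] R)
    (hα : α ^ m = ∑ j ∈ Icc 1 m, c j • α ^ (m - j)) :
    (lfsrRecurrence m c).IsSolution fun n => L (α ^ n) := by
  refine isSolution_lfsrRecurrence_iff.2 fun i => ?_
  rw [pow_add, hα, mul_sum, map_sum]
  refine sum_congr rfl fun j hj => ?_
  rw [mul_smul_comm, map_smul, smul_eq_mul, ← pow_add, Nat.add_sub_assoc (mem_Icc.1 hj).2]

end Recurrence

theorem PowerBasis.exists_linearMap_gen_pow {R S : Type*} [CommRing R] [Ring S] [Algebra R S]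
    (pb : PowerBasis R S) (a : ℕ → R) : ∃ L : S →ₗ[R] R, ∀ k < pb.dim, L (pb.gen ^ k) = a k :=
  ⟨pb.basis.constr R fun i => a i, fun k hk => by
    simpa [pb.coe_basis] using pb.basis.constr_basis R (fun i => a i) ⟨k, hk⟩⟩

namespace PowerBasis

variable {F K : Type*} [Field F] [Field K] [Algebra F K] (pb : PowerBasis F K) {L : K →ₗ[F] F}

theorem gen_pow_eq_one_of_periodic (hL : L ≠ 0) {T : ℕ}
    (hT : ∀ i, L (pb.gen ^ (i + T)) = L (pb.gen ^ i)) : pb.gen ^ T = 1 := by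
  by_contra hne
  have hβ : pb.gen ^ T - 1 ≠ 0 := sub_ne_zero.2 hne
  have hker : L ∘ₗ LinearMap.mulRight F (pb.gen ^ T - 1) = 0 :=
    pb.basis.ext fun i => by simp [pb.coe_basis, mul_sub, ← pow_add, hT]
  refine hL (LinearMap.ext fun y => ?_)
  simpa [hβ] using LinearMap.congr_fun hker (y * (pb.gen ^ T - 1)⁻¹)

theorem isLeast_period_linearMap_gen_pow (hL : L ≠ 0) (hpos : 0 < orderOf pb.gen) :
    IsLeast {T | 0 < T ∧ ∀ i, L (pb.gen ^ (i + T)) = L (pb.gen ^ i)} (orderOf pb.gen) :=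
  ⟨⟨hpos, fun i => by rw [pow_add, pow_orderOf_eq_one, mul_one]⟩, fun _ ⟨hT, hper⟩ =>
    Nat.le_of_dvd hT (orderOf_dvd_of_pow_eq_one (pb.gen_pow_eq_one_of_periodic hL hper))⟩

end PowerBasis

theorem lfsr_minimal_period_general (m : ℕ) (c : ℕ → ZMod 2)
    (p : Polynomial (ZMod 2))
    (hp : p = X ^ m - ∑ j ∈ Finset.Icc 1 m, C (c j) * X ^ (m - j))
    (hprim : IsPrimitivePoly p)
    (a : ℕ → ZMod 2)
    (ha : ∀ i, a (i + m) = ∑ j ∈ Finset.Icc 1 m, c j * a (i + m - j))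
    (ha0 : ∃ k, k < m ∧ a k ≠ 0) :
    IsLeast {T : ℕ | 0 < T ∧ ∀ i, a (i + T) = a i} (2 ^ m - 1) := by
  obtain ⟨hirr, hord⟩ := hprim
  have : Fact (Irreducible p) := ⟨hirr⟩
  have hdeg : p.natDegree = m := hp ▸ natDegree_X_pow_sub_sum m c
  let pb := AdjoinRoot.powerBasis hirr.ne_zero
  obtain ⟨L, hL⟩ := pb.exists_linearMap_gen_pow a
  have hroot : aeval pb.gen p = 0 := by
    rw [AdjoinRoot.powerBasis_gen, AdjoinRoot.aeval_eq, AdjoinRoot.mk_self]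
  have hLa : (fun n => L (pb.gen ^ n)) = a :=
    ((lfsrRecurrence m c).eq_iff_eqOn_range_order _ _
      (isSolution_lfsrRecurrence_linearMap_pow L (pow_eq_sum_of_aeval_eq_zero (hp ▸ hroot)))
      (isSolution_lfsrRecurrence_iff.2 ha)).2 fun k hk =>
        hL k (by rw [AdjoinRoot.powerBasis_dim, hdeg]; exact mem_range.1 hk)
  obtain ⟨k, hk, hak⟩ := ha0
  have hL0 : L ≠ 0 := by
    rintro rfl
    exact hak (by simp [← hLa])
  have hpos : 0 < orderOf pb.gen := by
    rw [AdjoinRoot.powerBasis_gen, hord, hdeg]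
    exact Nat.sub_pos_of_lt (Nat.one_lt_two_pow (by omega))
  rw [← hdeg, ← hord, ← hLa]
  exact pb.isLeast_period_linearMap_gen_pow hL0 hpos

/-- A linear recurring sequence over `𝔽₂` whose characteristic polynomial
`p = x^m - c_1 x^{m-1} - ⋯ - c_m` is primitive, started from a nonzero initial
state, is purely periodic with minimal period exactly `2^m - 1`. -/
theorem lfsr_minimal_period (m : ℕ) (hm : 1 ≤ m) (c : ℕ → ZMod 2)
    (p : Polynomial (ZMod 2))
    (hp : p = X ^ m - ∑ j ∈ Finset.Icc 1 m, C (c j) * X ^ (m - j))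
    (hprim : IsPrimitivePoly p)
    (a : ℕ → ZMod 2)
    (ha : ∀ i, a (i + m) = ∑ j ∈ Finset.Icc 1 m, c j * a (i + m - j))
    (ha0 : ∃ k, k < m ∧ a k ≠ 0) :
    IsLeast {T : ℕ | 0 < T ∧ ∀ i, a (i + T) = a i} (2 ^ m - 1) :=
  lfsr_minimal_period_general m c p hp hprim a ha ha0
end

section
/- Let p ∈ 𝔽₂[x] be primitive of degree m ≥ 1, written p = x^m − c_1 x^{m−1} − ⋯ − c_m, and let a : ℕ → 𝔽₂ satisfy a_{i+m} = c_1 a_{i+m−1} + ⋯ + c_m a_i for all i ≥ 0 with (a_0, …, a_{m−1}) ≠ (0, …, 0). Let σ ≥ 1 be an integer with gcd(σ, 2^m − 1) = 1. Then the decimated sequence b_i := a_{σ i} is purely periodic with minimal period exactly 2^m − 1. -/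
/-!
Realise `𝔽₂[x]/(p)` as a field `K` with `2^m` elements in which `α = x` generates `Kˣ`.
For a nonzero functional `φ : K → 𝔽₂` the sequences `n ↦ φ (β * αⁿ)` satisfy the recurrence
and, by a dimension count, exhaust its solutions; so `aₙ = φ (β * αⁿ)` with `β ≠ 0`, and
`bᵢ = φ (β * γⁱ)` with `γ = α^σ`, again a generator of `Kˣ` since `σ` is coprime to `2^m - 1`.
A period `T` of `b` makes `x ↦ φ ((β * γᵀ - β) * x)` vanish on `Kˣ`, hence on `K`, which forces
`γᵀ = 1` and `2^m - 1 ∣ T`.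
-/

open Polynomial

open Finset

def SatisfiesRecurrence {R : Type*} [Semiring R] (m : ℕ) (c : ℕ → R) (u : ℕ → R) : Prop :=
  ∀ i, u (i + m) = ∑ j ∈ Icc 1 m, c j * u (i + m - j)

theorem SatisfiesRecurrence.eq_of_eq_init {R : Type*} [Semiring R] {m : ℕ} {c : ℕ → R}
    {u v : ℕ → R} (hu : SatisfiesRecurrence m c u) (hv : SatisfiesRecurrence m c v)
    (h : ∀ k < m, u k = v k) : u = v := by
  funext n
  induction n using Nat.strong_induction_on with
  | _ n ih =>
    rcases lt_or_ge n m with hn | hn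
    · exact h n hn
    · obtain ⟨i, rfl⟩ := Nat.exists_eq_add_of_le' hn
      rw [hu, hv]
      refine sum_congr rfl fun j hj => ?_
      rw [ih _ (by simp only [mem_Icc] at hj; omega)]

section CharPoly

variable {R : Type*} [CommRing R]

noncomputable def recurrenceCharPoly (m : ℕ) (c : ℕ → R) : R[X] :=
  X ^ m - ∑ j ∈ Icc 1 m, C (c j) * X ^ (m - j)

variable {m : ℕ} {c : ℕ → R}

theorem natDegree_recurrenceCharPoly [Nontrivial R] : (recurrenceCharPoly m c).natDegree = m := by
  have htail : (∑ j ∈ Icc 1 m, C (c j) * X ^ (m - j)).degree < (m : WithBot ℕ) := by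
    refine (degree_sum_le _ _).trans_lt
      ((Finset.sup_lt_iff (WithBot.bot_lt_coe m)).2 fun j hj => ?_)
    simp only [mem_Icc] at hj
    exact (degree_C_mul_X_pow_le _ _).trans_lt (WithBot.coe_lt_coe.2 (show m - j < m by omega))
  have hXm : (X ^ m : R[X]).degree = m := degree_X_pow m
  exact natDegree_eq_of_degree_eq_some <|
    (degree_sub_eq_left_of_degree_lt (htail.trans_eq hXm.symm)).trans hXm

theorem pow_eq_sum_of_aeval_recurrenceCharPoly {A : Type*} [CommRing A] [Algebra R A] {α : A}
    (hα : aeval α (recurrenceCharPoly m c) = 0) : α ^ m = ∑ j ∈ Icc 1 m, c j • α ^ (m - j) := by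
  simpa [recurrenceCharPoly, sub_eq_zero, Algebra.smul_def] using hα

theorem satisfiesRecurrence_map_mul_pow {A : Type*} [CommRing A] [Algebra R A] (φ : A →ₗ[R] R)
    (β : A) {α : A} (hα : aeval α (recurrenceCharPoly m c) = 0) :
    SatisfiesRecurrence m c fun n => φ (β * α ^ n) := by
  intro i
  have hshift : β * α ^ (i + m) = ∑ j ∈ Icc 1 m, c j • (β * α ^ (i + m - j)) := by
    rw [pow_add, pow_eq_sum_of_aeval_recurrenceCharPoly hα, mul_sum, mul_sum]
    refine sum_congr rfl fun j hj => ?_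
    simp only [mem_Icc] at hj
    rw [mul_smul_comm, mul_smul_comm, Nat.add_sub_assoc hj.2, pow_add]
  simp only [hshift, map_sum, map_smul, smul_eq_mul]

end CharPoly

section FiniteField

variable {F K : Type*} [Field F] [Field K] [Fintype K]

theorem exists_pow_eq_of_orderOf_eq_card_sub_one {γ : K} (hγ : orderOf γ = Fintype.card K - 1)
    {x : K} (hx : x ≠ 0) : ∃ i, γ ^ i = x := by
  have : NeZero (Fintype.card K - 1) := ⟨by have := Fintype.one_lt_card (α := K); omega⟩
  obtain ⟨i, -, hi⟩ := (hγ ▸ IsPrimitiveRoot.orderOf γ).eq_pow_of_pow_eq_one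
    (FiniteField.pow_card_sub_one_eq_one x hx)
  exact ⟨i, hi⟩

theorem eq_zero_of_forall_map_mul_pow_eq_zero [Module F K] {φ : K →ₗ[F] F} (hφ : φ ≠ 0) {γ : K}
    (hγ : orderOf γ = Fintype.card K - 1) {δ : K} (h : ∀ i, φ (δ * γ ^ i) = 0) : δ = 0 := by
  by_contra hδ
  obtain ⟨y, hy⟩ : ∃ y, φ y ≠ 0 := by simpa [LinearMap.ext_iff] using hφ
  have hy0 : δ⁻¹ * y ≠ 0 := mul_ne_zero (inv_ne_zero hδ) (by rintro rfl; simp at hy)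
  obtain ⟨i, hi⟩ := exists_pow_eq_of_orderOf_eq_card_sub_one hγ hy0
  exact hy (by rw [← h i, hi, mul_inv_cancel_left₀ hδ])

theorem isLeast_periodic_map_mul_pow [Module F K] {φ : K →ₗ[F] F} (hφ : φ ≠ 0) {β γ : K}
    (hβ : β ≠ 0) (hγ : orderOf γ = Fintype.card K - 1) :
    IsLeast {T | 0 < T ∧ Function.Periodic (fun i => φ (β * γ ^ i)) T} (Fintype.card K - 1) := by
  refine ⟨⟨?_, fun i => by simp only [pow_add, ← hγ, pow_orderOf_eq_one, mul_one]⟩, ?_⟩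
  · have := Fintype.one_lt_card (α := K); omega
  rintro T ⟨hT, hper⟩
  have hshift : β * γ ^ T - β = 0 := by
    refine eq_zero_of_forall_map_mul_pow_eq_zero hφ hγ fun i => ?_
    rw [sub_mul, mul_assoc, ← pow_add, add_comm, map_sub]
    exact sub_eq_zero.2 (hper i)
  have hγT : γ ^ T = 1 := by
    simpa [sub_eq_zero, hβ] using hshift
  exact hγ ▸ Nat.le_of_dvd hT (orderOf_dvd_of_pow_eq_one hγT)

theorem SatisfiesRecurrence.exists_eq_map_mul_pow [Algebra F K] {m : ℕ} {c : ℕ → F}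
    {u : ℕ → F} (hu : SatisfiesRecurrence m c u) (hdim : Module.finrank F K = m)
    {φ : K →ₗ[F] F} (hφ : φ ≠ 0) {α : K} (hα : orderOf α = Fintype.card K - 1)
    (hroot : aeval α (recurrenceCharPoly m c) = 0) : ∃ β, ∀ n, u n = φ (β * α ^ n) := by
  -- injective since the powers of `α` exhaust `Kˣ`, hence bijective by dimension count
  let init : K →ₗ[F] Fin m → F :=
    LinearMap.pi fun k => φ ∘ₗ LinearMap.mulRight F (α ^ (k : ℕ))
  have hinj : Function.Injective init := by
    rw [← LinearMap.ker_eq_bot, LinearMap.ker_eq_bot']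
    intro β hβ
    have hzero : (fun n => φ (β * α ^ n)) = 0 :=
      (satisfiesRecurrence_map_mul_pow φ β hroot).eq_of_eq_init (fun i => by simp)
        fun k hk => by simpa [init] using congrFun hβ ⟨k, hk⟩
    exact eq_zero_of_forall_map_mul_pow_eq_zero hφ hα (congrFun hzero)
  obtain ⟨β, hβ⟩ := ((LinearMap.injective_iff_surjective_of_finrank_eq_finrank
    (by rw [hdim, Module.finrank_fin_fun])).mp hinj) fun k => u k
  refine ⟨β, congrFun (hu.eq_of_eq_init (satisfiesRecurrence_map_mul_pow φ β hroot)
    fun k hk => ?_)⟩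
  simpa [init] using (congrFun hβ ⟨k, hk⟩).symm

end FiniteField

theorem lfsr_decimation_minimal_period_general (m : ℕ) (c : ℕ → ZMod 2)
    (p : Polynomial (ZMod 2))
    (hp : p = X ^ m - ∑ j ∈ Finset.Icc 1 m, C (c j) * X ^ (m - j))
    (hprim : IsPrimitivePoly p)
    (a : ℕ → ZMod 2)
    (ha : ∀ i, a (i + m) = ∑ j ∈ Finset.Icc 1 m, c j * a (i + m - j))
    (ha0 : ∃ k, k < m ∧ a k ≠ 0)
    (σ : ℕ) (hgcd : Nat.gcd σ (2 ^ m - 1) = 1)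
    (b : ℕ → ZMod 2) (hb : ∀ i, b i = a (σ * i)) :
    IsLeast {T : ℕ | 0 < T ∧ ∀ i, b (i + T) = b i} (2 ^ m - 1) := by
  obtain ⟨hirr, hord⟩ := hprim
  have : Fact (Irreducible p) := ⟨hirr⟩
  have hdeg : p.natDegree = m := hp ▸ natDegree_recurrenceCharPoly
  let K := AdjoinRoot p
  have : Module.Finite (ZMod 2) K := (AdjoinRoot.powerBasis hirr.ne_zero).finite
  have : Finite K := Module.finite_of_finite (ZMod 2)
  let _ : Fintype K := Fintype.ofFinite K
  have hdim : Module.finrank (ZMod 2) K = m := by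
    rw [(AdjoinRoot.powerBasis hirr.ne_zero).finrank, AdjoinRoot.powerBasis_dim, hdeg]
  have hcard : Fintype.card K = 2 ^ m := by
    rw [Module.card_eq_pow_finrank (K := ZMod 2), ZMod.card, hdim]
  have hα : orderOf (AdjoinRoot.root p) = Fintype.card K - 1 := by rw [hord, hdeg, hcard]
  have hγ : orderOf (AdjoinRoot.root p ^ σ) = Fintype.card K - 1 := by
    rw [Nat.Coprime.orderOf_pow (by rwa [hα, hcard, Nat.coprime_comm]), hα]
  obtain ⟨φ, hφ⟩ := exists_ne (0 : Module.Dual (ZMod 2) K)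
  obtain ⟨β, hβ⟩ := SatisfiesRecurrence.exists_eq_map_mul_pow ha hdim hφ hα
    (by rw [recurrenceCharPoly, ← hp, AdjoinRoot.aeval_eq, AdjoinRoot.mk_self])
  have hβ0 : β ≠ 0 := by
    rintro rfl
    obtain ⟨k, -, hk⟩ := ha0
    simp [hβ] at hk
  have hb_pow : b = fun i => φ (β * (AdjoinRoot.root p ^ σ) ^ i) := by
    funext i
    rw [hb, hβ, pow_mul]
  rw [← hcard, hb_pow]
  exact isLeast_periodic_map_mul_pow hφ hβ0 hγ

/-- Decimating a maximal-period linear recurring sequence over `𝔽₂` by a step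
size `σ` coprime to `2^m - 1` again yields a purely periodic sequence with
minimal period exactly `2^m - 1`. -/
theorem lfsr_decimation_minimal_period (m : ℕ) (hm : 1 ≤ m) (c : ℕ → ZMod 2)
    (p : Polynomial (ZMod 2))
    (hp : p = X ^ m - ∑ j ∈ Finset.Icc 1 m, C (c j) * X ^ (m - j))
    (hprim : IsPrimitivePoly p)
    (a : ℕ → ZMod 2)
    (ha : ∀ i, a (i + m) = ∑ j ∈ Finset.Icc 1 m, c j * a (i + m - j))
    (ha0 : ∃ k, k < m ∧ a k ≠ 0)
    (σ : ℕ) (hσ : 1 ≤ σ) (hgcd : Nat.gcd σ (2 ^ m - 1) = 1)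
    (b : ℕ → ZMod 2) (hb : ∀ i, b i = a (σ * i)) :
    IsLeast {T : ℕ | 0 < T ∧ ∀ i, b (i + T) = b i} (2 ^ m - 1) :=
  lfsr_decimation_minimal_period_general m c p hp hprim a ha ha0 σ hgcd b hb
end

section
/- Let p ∈ 𝔽₂[x] have degree m ≥ 1 and let h ∈ 𝔽₂[x] with deg h < m. Then multiplication by x^σ modulo p shifts the Laurent expansion coefficients: for every σ ≥ 0 and every j ≥ 0, c_j(x^σ·h %ₘ p) = c_{j+σ}(h). (This is the statement that the polynomial LCG representation X_i = x^{σ}·X_{i−1} mod p reproduces the σ-step decimation of the Laurent coefficient stream of X_0/p.) -/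
open Polynomial

/-- `laurentCoeff p h j` is the coefficient `c_j(h)` of `x^{-j-1}` in the Laurent
expansion of `h(x)/p(x)` at infinity, computed as the `y^j`-coefficient of the
power series `(reflect (m-1) h) * (reverse p)⁻¹` where `m = deg p`. -/
noncomputable def laurentCoeff (p h : Polynomial (ZMod 2)) (j : ℕ) : ZMod 2 :=
  PowerSeries.coeff (R := ZMod 2) j
    ((↑(h.reflect (p.natDegree - 1)) : PowerSeries (ZMod 2)) *
      (↑p.reverse : PowerSeries (ZMod 2))⁻¹)

private lemma reflect_succ_eq {R : Type*} [Semiring R] (N : ℕ) (f : R[X])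
    (hf : f.natDegree ≤ N) : f.reflect (N + 1) = X * f.reflect N := by
  ext i
  cases i with
  | zero =>
      have h0 : f.coeff (N + 1) = 0 :=
        coeff_eq_zero_of_natDegree_lt (lt_of_le_of_lt hf (Nat.lt_succ_self N))
      simp [coeff_reflect, revAt_le (Nat.zero_le (N + 1)), h0]
  | succ n =>
      rw [coeff_reflect, coeff_X_mul, coeff_reflect]
      rcases le_or_gt n N with hn | hn
      · rw [revAt_le (by omega : n + 1 ≤ N + 1), revAt_le hn]
        congr 1
        omega
      · rw [revAt_eq_self_of_lt (by omega : N + 1 < n + 1), revAt_eq_self_of_lt hn,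
          coeff_eq_zero_of_natDegree_lt (by omega : f.natDegree < n + 1),
          coeff_eq_zero_of_natDegree_lt (by omega : f.natDegree < n)]

private lemma laurentCoeff_X_mul (m : ℕ) (hm : 1 ≤ m) (p : Polynomial (ZMod 2))
    (hp : p.degree = (m : WithBot ℕ)) (h : Polynomial (ZMod 2))
    (hh : h.degree < (m : WithBot ℕ)) (j : ℕ) :
    laurentCoeff p (X * h %ₘ p) j = laurentCoeff p h (j + 1) := by
  have hp0 : p ≠ 0 := fun h0 => by simp [h0] at hp
  have hnd : p.natDegree = m := natDegree_eq_of_degree_eq_some hp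
  have hmonic : p.Monic := by
    have h1 : p.leadingCoeff ≠ 0 := leadingCoeff_ne_zero.mpr hp0
    have h2 : ∀ a : ZMod 2, a ≠ 0 → a = 1 := by decide
    exact h2 _ h1
  have hhnd : h.natDegree ≤ m - 1 := by
    rcases eq_or_ne h 0 with rfl | h0
    · simp
    · have h1 : ((h.natDegree : ℕ) : WithBot ℕ) < (m : WithBot ℕ) :=
        (degree_eq_natDegree h0) ▸ hh
      have h2 : h.natDegree < m := by exact_mod_cast h1
      omega
  set h' := X * h %ₘ p with hh'
  have hd' : h'.degree < p.degree := degree_modByMonic_lt _ hmonic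
  have hnd' : h'.natDegree ≤ m - 1 := by
    rcases eq_or_ne h' 0 with he | he
    · simp [he]
    · have h1 : ((h'.natDegree : ℕ) : WithBot ℕ) < (m : WithBot ℕ) := by
        rw [← degree_eq_natDegree he, ← hp]; exact hd'
      have h2 : h'.natDegree < m := by exact_mod_cast h1
      omega
  -- the quotient is a constant
  have hXh : (X * h).natDegree ≤ m := by
    refine natDegree_mul_le.trans ?_
    rw [natDegree_X]
    omega
  have hqdeg : ((X * h) /ₘ p).natDegree = 0 := by
    rw [natDegree_divByMonic _ hmonic, hnd]
    omega
  obtain ⟨a, ha⟩ : ∃ a, (X * h) /ₘ p = C a :=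
    ⟨_, eq_C_of_natDegree_le_zero hqdeg.le⟩
  have key : X * h = h' + p * C a := by
    conv_lhs => rw [← modByMonic_add_div (X * h) p]
    rw [ha, hh']
  -- reflect both sides at degree m
  have hrefl : h.reflect (m - 1) = X * h'.reflect (m - 1) + C a * p.reverse := by
    have e1 : (X * h).reflect m = h.reflect (m - 1) := by
      have : (X * h).reflect (1 + (m - 1)) = X.reflect 1 * h.reflect (m - 1) :=
        reflect_mul X h (by simp) hhnd
      have hX1 : (X : Polynomial (ZMod 2)).reflect 1 = 1 := by
        rw [← pow_one (X : Polynomial (ZMod 2)), reflect_monomial]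
        simp [revAt_le]
      rw [show 1 + (m - 1) = m by omega] at this
      rw [this, hX1, one_mul]
    have e2 : (h' + p * C a).reflect m = X * h'.reflect (m - 1) + C a * p.reverse := by
      rw [reflect_add]
      congr 1
      · rw [show m = (m - 1) + 1 by omega]
        exact reflect_succ_eq _ _ hnd'
      · rw [mul_comm, reflect_C_mul, reverse, hnd]
    rw [← e1, key, e2]
  -- pass to power series
  have hR : PowerSeries.constantCoeff (↑p.reverse : PowerSeries (ZMod 2)) ≠ 0 := by
    rw [Polynomial.constantCoeff_coe, coeff_zero_reverse, hmonic.leadingCoeff]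
    exact one_ne_zero
  have hreflPS : (↑(h.reflect (m - 1)) : PowerSeries (ZMod 2)) =
      PowerSeries.X * (↑(h'.reflect (m - 1)) : PowerSeries (ZMod 2)) +
        PowerSeries.C a * (↑p.reverse : PowerSeries (ZMod 2)) := by
    rw [hrefl, Polynomial.coe_add, Polynomial.coe_mul, Polynomial.coe_mul,
      Polynomial.coe_X, Polynomial.coe_C]
  unfold laurentCoeff
  rw [hnd, hreflPS, add_mul, mul_assoc, mul_assoc,
    PowerSeries.mul_inv_cancel _ hR, mul_one, map_add,
    PowerSeries.coeff_succ_X_mul, PowerSeries.coeff_C]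
  simp

/-- Multiplication by `x^σ` modulo `p` shifts the Laurent expansion coefficient
stream: `c_j(x^σ·h %ₘ p) = c_{j+σ}(h)`. -/
theorem laurentCoeff_pow_mul_modByMonic (m : ℕ) (hm : 1 ≤ m)
    (p : Polynomial (ZMod 2)) (hp : p.degree = (m : WithBot ℕ))
    (h : Polynomial (ZMod 2)) (hh : h.degree < (m : WithBot ℕ)) :
    ∀ σ j : ℕ, laurentCoeff p (X ^ σ * h %ₘ p) j = laurentCoeff p h (j + σ) := by
  have hp0 : p ≠ 0 := fun h0 => by simp [h0] at hp
  have hmonic : p.Monic := by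
    have h1 : p.leadingCoeff ≠ 0 := leadingCoeff_ne_zero.mpr hp0
    have h2 : ∀ a : ZMod 2, a ≠ 0 → a = 1 := by decide
    exact h2 _ h1
  intro σ
  induction σ with
  | zero =>
      intro j
      rw [pow_zero, one_mul, (modByMonic_eq_self_iff hmonic).mpr (by rw [hp]; exact hh),
        Nat.add_zero]
  | succ σ ih =>
      intro j
      have hr : (X ^ σ * h %ₘ p).degree < (m : WithBot ℕ) := by
        rw [← hp]; exact degree_modByMonic_lt _ hmonic
      have key : X ^ (σ + 1) * h %ₘ p = X * (X ^ σ * h %ₘ p) %ₘ p := by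
        have e : X ^ (σ + 1) * h = X * (X ^ σ * h %ₘ p) + p * (X * (X ^ σ * h /ₘ p)) := by
          conv_lhs => rw [pow_succ, mul_comm (X ^ σ) X, mul_assoc,
            ← modByMonic_add_div (X ^ σ * h) p]
          ring
        rw [e, add_modByMonic, self_mul_modByMonic hmonic, add_zero]
      rw [key, laurentCoeff_X_mul m hm p hp _ hr j, ih (j + 1),
        show j + 1 + σ = j + (σ + 1) by omega]
end
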